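/- arXiv:1905.03310 — 5 statements merged into one kernel-verified Lean document; each statement's English description precedes it below -/
import Mathlib

section
/- In a simplicial abelian group A with normed levels, if c ∈ A_n is a cycle (∂c = 0, where ∂ = Σ_{j=0}^n (−1)^j d_j) and f^{(n)} : A_n → NA_n is the normalizing chain map with id − f^{(n)} = T∂ + ∂T for a chain homotopy T, then f^{(n)}(c) is a cycle homologous to c lying in the normalized complex NA_n, and ‖f^{(n)}(c)‖ ≤ 2^{n-1}‖c‖ whenever each d_j and s_j has norm ≤ 1. -/
/-- Abstract form of the normalization lemma for cycles. Let `U = A_{n+1}`, `V = A_n`,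
`W = A_{n−1}` be levels of a simplicial abelian group with normed levels, `∂ : V → W` and
`∂' : U → V` the boundary maps (with `∂ ∘ ∂' = 0`), `N ⊆ V` the normalized subspace
`∩_{j<n} ker d_j`, and `f = (id − s_{n−1}d_{n−1}) ∘ ⋯ ∘ (id − s_1 d_1)` the normalizing
chain map (each `d j`, `s j` of norm `≤ 1`), mapping `V` into `N`, with a chain homotopy
`id − f = T'∂ + ∂'T`. If `c` is a cycle (`∂ c = 0`) then `f c` is a cycle, lies in `N`,
is homologous to `c`, and `‖f c‖ ≤ 2^(n−1) ‖c‖`. -/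
theorem stmt4 {U V W : Type*}
    [NormedAddCommGroup U] [NormedSpace ℝ U]
    [NormedAddCommGroup V] [NormedSpace ℝ V]
    [NormedAddCommGroup W] [NormedSpace ℝ W]
    (n : ℕ) (hn : 1 ≤ n)
    (bd : V →L[ℝ] W) (bd' : U →L[ℝ] V) (hbd : ∀ u, bd (bd' u) = 0)
    (N : Submodule ℝ V)
    (d : Fin (n - 1) → V →L[ℝ] W) (s : Fin (n - 1) → W →L[ℝ] V)
    (hd : ∀ j, ‖d j‖ ≤ 1) (hs : ∀ j, ‖s j‖ ≤ 1)
    (f : V →L[ℝ] V)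
    (hf : f = (List.ofFn (fun j : Fin (n - 1) => (1 : V →L[ℝ] V) - (s j).comp (d j))).prod)
    (hfN : ∀ v, f v ∈ N)
    (T : V →L[ℝ] U) (T' : W →L[ℝ] V)
    (hhomot : ∀ v, v - f v = T' (bd v) + bd' (T v))
    (c : V) (hc : bd c = 0) :
    f c ∈ N ∧ bd (f c) = 0 ∧ c - f c = bd' (T c) ∧ ‖f c‖ ≤ 2 ^ (n - 1) * ‖c‖ := by

  have hhom : c - f c = bd' (T c) := by
    have := hhomot c
    rw [hc] at this
    simpa using this
  have hcycle : bd (f c) = 0 := by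
    have : f c = c - bd' (T c) := by rw [← hhom]; abel
    rw [this, map_sub, hc, hbd, sub_zero]
  refine ⟨hfN c, hcycle, hhom, ?_⟩
  have hnorm : ‖f‖ ≤ 2 ^ (n - 1) := by
    rcases Nat.eq_zero_or_pos (n - 1) with h | h
    · have : f = 1 := by simp [hf, h]
      rw [this, h, pow_zero]
      exact ContinuousLinearMap.norm_id_le
    · rw [hf]
      have hne : (List.ofFn (fun j : Fin (n - 1) => (1 : V →L[ℝ] V) - (s j).comp (d j))) ≠ [] := by
        simp [List.ofFn_eq_nil_iff, Nat.pos_iff_ne_zero.mp h]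
      calc ‖(List.ofFn (fun j : Fin (n - 1) => (1 : V →L[ℝ] V) - (s j).comp (d j))).prod‖
          ≤ ((List.ofFn (fun j : Fin (n - 1) => (1 : V →L[ℝ] V) - (s j).comp (d j))).map norm).prod :=
            List.norm_prod_le' hne
        _ ≤ 2 ^ (n - 1) := by
            rw [List.map_ofFn]
            have hb : ∀ j : Fin (n - 1), ‖(1 : V →L[ℝ] V) - (s j).comp (d j)‖ ≤ 2 := by
              intro j
              calc ‖(1 : V →L[ℝ] V) - (s j).comp (d j)‖
                  ≤ ‖(1 : V →L[ℝ] V)‖ + ‖(s j).comp (d j)‖ := norm_sub_le _ _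
                _ ≤ 1 + 1 * 1 := by
                    gcongr
                    · exact ContinuousLinearMap.norm_id_le
                    · exact le_trans (ContinuousLinearMap.opNorm_comp_le _ _)
                        (mul_le_mul (hs j) (hd j) (norm_nonneg _) zero_le_one)
                _ = 2 := by norm_num
            rw [List.prod_ofFn]
            calc ∏ j : Fin (n - 1), ‖(1 : V →L[ℝ] V) - (s j).comp (d j)‖
                ≤ ∏ _j : Fin (n - 1), (2 : ℝ) :=
                  Finset.prod_le_prod (fun j _ => norm_nonneg _) (fun j _ => hb j)
              _ = 2 ^ (n - 1) := by simp
  calc ‖f c‖ ≤ ‖f‖ * ‖c‖ := f.le_opNorm c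
    _ ≤ 2 ^ (n - 1) * ‖c‖ := by gcongr
end

section
/- For the combinatorial n-sphere S^m (obtained by collapsing the boundary of the standard m-simplex Δ[m] to a point), π^comb_n(S^m) is the one-point set when n ≠ m, and has exactly two elements {*, id} when n = m. -/
/-- A pointed simplicial set, recorded through the data relevant for combinatorial
homotopy: levelwise pointed sets of simplices together with basepoint-preserving face
maps `d n j : X_{n+1} → X_n` (the `j`-th face, meaningful for `j ≤ n + 1`). -/
structure PSS where
  obj : ℕ → Type
  pt : ∀ n, obj n
  d : ∀ n, ℕ → obj (n + 1) → obj n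
  d_pt : ∀ n j, d n j (pt (n + 1)) = pt n

namespace PSS

/-- `x ∈ X_n` is spherical when all its faces are the basepoint; by Yoneda such simplices
are exactly the pointed simplicial maps `Sⁿ → X`. -/
def isSph (X : PSS) : ∀ n, X.obj n → Prop
  | 0 => fun _ => True
  | n + 1 => fun x => ∀ j ≤ n + 1, X.d n j x = X.pt n

/-- The set `Hom_{S*}(Sⁿ, X)` of spherical `n`-simplices. -/
def Sph (X : PSS) (n : ℕ) := {x : X.obj n // X.isSph n x}

/-- The homotopy relation between spherical `n`-simplices (May, Definition 3.1):
`x R y` iff there is `z ∈ X_{n+1}` with `∂_j z = *` for `j < n`, `∂_n z = x`,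
`∂_{n+1} z = y`. -/
def Rel (X : PSS) (n : ℕ) (a b : X.Sph n) : Prop :=
  ∃ z : X.obj (n + 1),
    (∀ j < n, X.d n j z = X.pt n) ∧ X.d n n z = a.1 ∧ X.d n (n + 1) z = b.1

/-- Combinatorial homotopy `π^comb_n(X)`: spherical `n`-simplices modulo the equivalence
relation generated by the homotopy relation `Rel`. -/
def picomb (X : PSS) (n : ℕ) := Quot (X.Rel n)

/-- The basepoint is spherical. -/
def sphPt (X : PSS) (n : ℕ) : X.Sph n :=
  ⟨X.pt n, by cases n with
    | zero => trivial
    | succ m => exact fun j _ => X.d_pt m j⟩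

/-- The basepoint of `π^comb_n(X)`. -/
def picombPt (X : PSS) (n : ℕ) : X.picomb n := Quot.mk _ (X.sphPt n)

end PSS

/-- The coface map `δ_j : [q] → [q+1]` (the monotone injection skipping `j`),
with the index `j` clamped into range. -/
def coface (q j : ℕ) : Fin (q + 1) → Fin (q + 2) :=
  Fin.succAbove ⟨min j (q + 1), by omega⟩

/-- The combinatorial sphere `S^m = Δ[m]/∂Δ[m]`: its nonbasepoint `q`-simplices are the
monotone surjections `[q] → [m]`; faces are precomposition with cofaces, collapsing
non-surjective composites to the basepoint. -/
def SphSS (m : ℕ) : PSS where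
  obj q := Option {f : Fin (q + 1) → Fin (m + 1) // Monotone f ∧ Function.Surjective f}
  pt _ := none
  d q j x := x.bind (fun f =>
    if h : Function.Surjective (f.1 ∘ coface q j)
    then some ⟨f.1 ∘ coface q j, f.2.1.comp (Fin.strictMono_succAbove _).monotone, h⟩
    else none)
  d_pt _ _ := rfl


namespace SphAux

lemma coface_eq {q j : ℕ} (h : j ≤ q + 1) :
    coface q j = Fin.succAbove ⟨j, by omega⟩ := by
  have e : (⟨min j (q + 1), by omega⟩ : Fin (q + 2)) = ⟨j, by omega⟩ := by
    apply Fin.ext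
    simpa using Nat.min_eq_left h
  rw [coface, e]

lemma surj_comp {q m : ℕ} (f : Fin (q + 2) → Fin (m + 1)) (hf : Function.Surjective f)
    (p p' : Fin (q + 2)) (hne : p' ≠ p) (hval : f p' = f p) :
    Function.Surjective (f ∘ Fin.succAbove p) := by
  intro y
  obtain ⟨w, hw⟩ := hf y
  by_cases hwp : w = p
  · subst hwp
    obtain ⟨i, hi⟩ := Fin.exists_succAbove_eq hne
    exact ⟨i, by rw [Function.comp_apply, hi, hval, hw]⟩
  · obtain ⟨i, hi⟩ := Fin.exists_succAbove_eq hwp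
    exact ⟨i, by simp [Function.comp, hi, hw]⟩

lemma not_surj_comp {q m : ℕ} (f : Fin (q + 2) → Fin (m + 1)) (hinj : Function.Injective f)
    (p : Fin (q + 2)) : ¬ Function.Surjective (f ∘ Fin.succAbove p) := by
  intro hs
  obtain ⟨i, hi⟩ := hs (f p)
  exact Fin.succAbove_ne p i (hinj hi)

lemma inj_of_not_surj {k m : ℕ} (f : Fin (k + 2) → Fin (m + 1)) (hmono : Monotone f)
    (hsurj : Function.Surjective f)
    (h : ∀ p : Fin (k + 2), ¬ Function.Surjective (f ∘ Fin.succAbove p)) :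
    Function.Injective f := by
  intro u v huv
  by_contra hne
  rcases Ne.lt_or_gt hne with hlt | hlt
  case _ =>
    have hu1 : (u : ℕ) + 1 < k + 2 := by have := hlt; omega
    set p' : Fin (k + 2) := ⟨(u : ℕ) + 1, hu1⟩ with hp'
    have h1 : f u ≤ f p' := hmono (by simp [Fin.le_def, hp'])
    have h2 : f p' ≤ f v := hmono (by simp [Fin.le_def, hp']; omega)
    have hval : f p' = f u := le_antisymm (huv ▸ h2) h1
    exact h u (surj_comp f hsurj u p' (by simp [hp', Fin.ext_iff]) hval)
  case _ =>
    have hu1 : (v : ℕ) + 1 < k + 2 := by have := hlt; omega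
    set p' : Fin (k + 2) := ⟨(v : ℕ) + 1, hu1⟩ with hp'
    have h1 : f v ≤ f p' := hmono (by simp [Fin.le_def, hp'])
    have h2 : f p' ≤ f u := hmono (by simp [Fin.le_def, hp']; omega)
    have hval : f p' = f v := le_antisymm (huv ▸ h2) h1
    exact h v (surj_comp f hsurj v p' (by simp [hp', Fin.ext_iff]) hval)

lemma mono_surj_fin_id {n : ℕ} (f : Fin n → Fin n) (hmono : Monotone f)
    (hsurj : Function.Surjective f) : f = id := by
  have hinj : Function.Injective f := Finite.injective_iff_surjective.mpr hsurj
  have hsm : StrictMono f := hmono.strictMono_of_injective hinj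
  have : WellFoundedLT (Fin n) := inferInstance
  exact (StrictMono.range_inj (f := f) (g := id) hsm strictMono_id).1
    (by rw [Set.range_eq_univ.2 hsurj, Set.range_id])

lemma d_some (m q j : ℕ)
    (f : {f : Fin (q + 2) → Fin (m + 1) // Monotone f ∧ Function.Surjective f}) :
    (SphSS m).d q j (some f) =
      if h : Function.Surjective (f.1 ∘ coface q j)
      then some ⟨f.1 ∘ coface q j, f.2.1.comp (Fin.strictMono_succAbove _).monotone, h⟩
      else none := rfl

lemma not_surj_of_sph {m k : ℕ}
    (f : {f : Fin (k + 2) → Fin (m + 1) // Monotone f ∧ Function.Surjective f})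
    (hx : (SphSS m).isSph (k + 1) (some f)) :
    ∀ p : Fin (k + 2), ¬ Function.Surjective (f.1 ∘ Fin.succAbove p) := by
  intro p hs
  have h := hx (p : ℕ) (by omega)
  have hsu : Function.Surjective (f.1 ∘ coface k (p : ℕ)) := by
    rw [coface_eq (show (p : ℕ) ≤ k + 1 by omega), Fin.eta]
    exact hs
  rw [d_some, dif_pos hsu] at h
  exact Option.some_ne_none _ h

lemma sph_some_inj {m k : ℕ}
    (f : {f : Fin (k + 2) → Fin (m + 1) // Monotone f ∧ Function.Surjective f})
    (hx : (SphSS m).isSph (k + 1) (some f)) : Function.Injective f.1 :=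
  inj_of_not_surj f.1 f.2.1 f.2.2 (not_surj_of_sph f hx)

lemma sph_eq_none {m n : ℕ} (hnm : n ≠ m) (x : (SphSS m).obj n)
    (hx : (SphSS m).isSph n x) : x = none := by
  cases n with
  | zero =>
    cases x with
    | none => rfl
    | some f =>
      have := Fintype.card_le_of_surjective f.1 f.2.2
      simp only [Fintype.card_fin] at this
      omega
  | succ k =>
    cases x with
    | none => rfl
    | some f =>
      have hinj := sph_some_inj f hx
      have h1 := Fintype.card_le_of_injective f.1 hinj
      have h2 := Fintype.card_le_of_surjective f.1 f.2.2
      simp only [Fintype.card_fin] at h1 h2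
      omega

lemma sph_eq {m : ℕ} (x : (SphSS m).obj m) (hx : (SphSS m).isSph m x) :
    x = none ∨ x = some ⟨id, monotone_id, Function.surjective_id⟩ := by
  cases x with
  | none => exact Or.inl rfl
  | some f =>
    right
    congr 1
    apply Subtype.ext
    cases m with
    | zero =>
      exact funext fun i => Fin.ext (by
        have := (f.1 i).isLt
        have := i.isLt
        omega)
    | succ k => exact mono_surj_fin_id f.1 f.2.1 f.2.2

lemma id_sph (m : ℕ) :
    (SphSS m).isSph m (some ⟨id, monotone_id, Function.surjective_id⟩) := by
  cases m with
  | zero => trivial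
  | succ k =>
    intro j hj
    have hns : ¬ Function.Surjective
        ((id : Fin (k + 2) → Fin (k + 2)) ∘ coface k j) := by
      rw [coface_eq hj]
      exact not_surj_comp id Function.injective_id _
    rw [d_some, dif_neg hns]
    rfl

lemma d_congr {m q : ℕ}
    (g : {f : Fin (q + 2) → Fin (m + 1) // Monotone f ∧ Function.Surjective f})
    {j j' : ℕ} (h : g.1 ∘ coface q j = g.1 ∘ coface q j') :
    (SphSS m).d q j (some g) = (SphSS m).d q j' (some g) := by
  rw [d_some, d_some]
  by_cases hs : Function.Surjective (g.1 ∘ coface q j)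
  · rw [dif_pos hs, dif_pos (h ▸ hs)]
    exact congrArg some (Subtype.ext h)
  · rw [dif_neg hs, dif_neg (fun hs' => hs (h ▸ hs'))]

lemma rel_eq {m n : ℕ} (a b : (SphSS m).Sph n) (h : (SphSS m).Rel n a b) : a = b := by
  obtain ⟨z, hlow, ha, hb⟩ := h
  apply Subtype.ext
  cases z with
  | none => rw [← ha, ← hb]; rfl
  | some g =>
    by_cases hinj : Function.Injective g.1
    · have h1 : (SphSS m).d n n (some g) = none := by
        rw [d_some, dif_neg (by
          rw [coface_eq (show n ≤ n + 1 by omega)]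
          exact not_surj_comp g.1 hinj _)]
      have h2 : (SphSS m).d n (n + 1) (some g) = none := by
        rw [d_some, dif_neg (by
          rw [coface_eq (le_refl (n + 1))]
          exact not_surj_comp g.1 hinj _)]
      rw [← ha, ← hb, h1, h2]
    · have main : ∀ u v : Fin (n + 2), u < v → g.1 u = g.1 v →
          g.1 ⟨n, by omega⟩ = g.1 ⟨n + 1, by omega⟩ := by
        intro u v hlt hval
        have hu1 : (u : ℕ) + 1 < n + 2 := by
          have := hlt
          have := v.isLt
          rw [Fin.lt_def] at hlt
          omega
        have hadj : g.1 u = g.1 ⟨(u : ℕ) + 1, hu1⟩ := by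
          refine le_antisymm (g.2.1 (by simp [Fin.le_def])) ?_
          rw [hval]
          exact g.2.1 (by
            rw [Fin.lt_def] at hlt
            rw [Fin.le_def]
            simpa using hlt)
        have hun : (u : ℕ) = n := by
          by_contra hun
          have hultn : (u : ℕ) < n := by
            rw [Fin.lt_def] at hlt
            have := v.isLt
            omega
          have hface := hlow (u : ℕ) hultn
          have hsu : Function.Surjective (g.1 ∘ coface n (u : ℕ)) := by
            rw [coface_eq (show (u : ℕ) ≤ n + 1 by omega), Fin.eta]
            exact surj_comp g.1 g.2.2 u ⟨(u : ℕ) + 1, hu1⟩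
              (by simp [Fin.ext_iff]) hadj.symm
          rw [d_some, dif_pos hsu] at hface
          exact Option.some_ne_none _ hface
        have hue : u = ⟨n, by omega⟩ := Fin.ext hun
        have hue1 : (⟨(u : ℕ) + 1, hu1⟩ : Fin (n + 2)) = ⟨n + 1, by omega⟩ :=
          Fin.ext (by simp [hun])
        rw [← hue, ← hue1]
        exact hadj
      have key : g.1 ⟨n, by omega⟩ = g.1 ⟨n + 1, by omega⟩ := by
        obtain ⟨u, v, hval, hne⟩ := Function.not_injective_iff.mp hinj
        rcases hne.lt_or_gt with hlt | hlt
        · exact main u v hlt hval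
        · exact main v u hlt hval.symm
      have hfun : g.1 ∘ coface n n = g.1 ∘ coface n (n + 1) := by
        rw [coface_eq (show n ≤ n + 1 by omega), coface_eq (le_refl (n + 1))]
        funext x
        simp only [Function.comp_apply, Fin.succAbove]
        by_cases hx : (x : ℕ) < n
        · rw [if_pos, if_pos]
          · simp only [Fin.lt_def, Fin.coe_castSucc]
            omega
          · simp only [Fin.lt_def, Fin.coe_castSucc]
            omega
        · have hxn : (x : ℕ) = n := by have := x.isLt; omega
          rw [if_neg, if_pos]
          · have e1 : x.succ = (⟨n + 1, by omega⟩ : Fin (n + 2)) :=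
              Fin.ext (by simp [hxn])
            have e2 : x.castSucc = (⟨n, by omega⟩ : Fin (n + 2)) :=
              Fin.ext (by simp [hxn])
            rw [e1, e2, key]
          · simp only [Fin.lt_def, Fin.coe_castSucc]
            omega
          · simp only [Fin.lt_def, Fin.coe_castSucc]
            omega
      rw [← ha, ← hb]
      exact d_congr g hfun

def sphId (m : ℕ) : (SphSS m).Sph m :=
  ⟨some ⟨id, monotone_id, Function.surjective_id⟩, id_sph m⟩

end SphAux

/-- For the combinatorial sphere `S^m`, the combinatorial homotopy `π^comb_n(S^m)` is the
one-point set when `n ≠ m`, and has exactly two elements (the basepoint and the class of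
the identity) when `n = m`. -/
theorem stmt8 (m n : ℕ) :
    (n ≠ m → (∀ a b : (SphSS m).picomb n, a = b) ∧ Nonempty ((SphSS m).picomb n)) ∧
    (∃ a b : (SphSS m).picomb m, a ≠ b ∧ ∀ c : (SphSS m).picomb m, c = a ∨ c = b) := by
  constructor
  · intro hnm
    refine ⟨?_, ⟨(SphSS m).picombPt n⟩⟩
    intro a b
    induction a using Quot.ind with | _ x => ?_
    induction b using Quot.ind with | _ y => ?_
    exact congrArg _ (Subtype.ext (by
      rw [SphAux.sph_eq_none hnm x.1 x.2, SphAux.sph_eq_none hnm y.1 y.2]))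
  · refine ⟨(SphSS m).picombPt m, Quot.mk _ (SphAux.sphId m), ?_, ?_⟩
    · intro hab
      have h := congrArg
        (Quot.lift (fun x => x) (fun a b h => SphAux.rel_eq a b h)) hab
      have hv : ((SphSS m).sphPt m).1 = (SphAux.sphId m).1 := congrArg Subtype.val h
      exact Option.some_ne_none _ hv.symm
    · intro c
      induction c using Quot.ind with | _ x => ?_
      rcases SphAux.sph_eq x.1 x.2 with h | h
      · exact Or.inl (congrArg (Quot.mk _) (Subtype.ext h))
      · exact Or.inr (congrArg (Quot.mk _) (Subtype.ext h))
end

section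
/- The only elements x of the n-simplices of S^n = Δ[n]/∂Δ[n] with all faces equal to the basepoint are the basepoint and the class of the identity map id_{[n]}; moreover if z is an (n+1)-simplex of S^n with ∂_j z = * for all j < n, then ∂_n z = ∂_{n+1} z. Hence the homotopy relation R on {*, id} is the diagonal. -/

private theorem monoSurjId {k : ℕ} (f : Fin (k+1) → Fin (k+1)) (hm : Monotone f)
    (hs : Function.Surjective f) : f = id := by
  have hinj : Function.Injective f := Finite.injective_iff_surjective.mpr hs
  have hsm : StrictMono f := hm.strictMono_of_injective hinj
  have he : StrictMono.orderIsoOfSurjective f hsm hs = OrderIso.refl _ :=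
    Subsingleton.elim _ _
  funext x
  have hx : StrictMono.orderIsoOfSurjective f hsm hs x = f x := by
    rw [StrictMono.coe_orderIsoOfSurjective]
  rw [he] at hx
  simpa using hx.symm

private theorem fiber_singleton {m n : ℕ} (f : Fin (n+2) → Fin (m+1))
    (hs : Function.Surjective f) (j : Fin (n+2))
    (h : ¬ Function.Surjective (f ∘ Fin.succAbove j)) :
    ∀ a, f a = f j → a = j := by
  intro a ha
  by_contra hne
  apply h
  intro y
  obtain ⟨c, hc⟩ := hs y
  by_cases hcj : c = j
  · obtain ⟨i, hi⟩ := Fin.exists_succAbove_eq hne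
    exact ⟨i, by rw [Function.comp_apply, hi, ha, ← hcj, hc]⟩
  · obtain ⟨i, hi⟩ := Fin.exists_succAbove_eq hcj
    exact ⟨i, by rw [Function.comp_apply, hi, hc]⟩

private theorem d_some {m q : ℕ} (j : ℕ)
    (f : {f : Fin (q+2) → Fin (m+1) // Monotone f ∧ Function.Surjective f}) :
    (SphSS m).d q j (some f) =
      if h : Function.Surjective (f.1 ∘ coface q j)
      then some ⟨f.1 ∘ coface q j, f.2.1.comp (Fin.strictMono_succAbove _).monotone, h⟩
      else none := rfl

private theorem coface_eq {q j : ℕ} (h : j ≤ q + 1) :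
    coface q j = Fin.succAbove ⟨j, by omega⟩ := by
  have hmk : (⟨min j (q+1), by omega⟩ : Fin (q+2)) = ⟨j, by omega⟩ :=
    Fin.ext (min_eq_left h)
  unfold coface
  rw [hmk]

/-- The only `n`-simplices of `S^n = Δ[n]/∂Δ[n]` all of whose faces are the basepoint are
the basepoint and the class of `id_{[n]}`; any `(n+1)`-simplex `z` with `∂_j z = *` for all
`j < n` has `∂_n z = ∂_{n+1} z`; hence the homotopy relation `R` on `{*, id}` is the
diagonal. -/
theorem stmt9 (n : ℕ) :
    (∀ x : (SphSS n).obj n, (SphSS n).isSph n x →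
      x = none ∨ x = some ⟨id, monotone_id, Function.surjective_id⟩) ∧
    (∀ z : (SphSS n).obj (n + 1), (∀ j < n, (SphSS n).d n j z = none) →
      (SphSS n).d n n z = (SphSS n).d n (n + 1) z) ∧
    (∀ a b : (SphSS n).Sph n, (SphSS n).Rel n a b → a = b) := by
  have part2 : ∀ z : (SphSS n).obj (n + 1), (∀ j < n, (SphSS n).d n j z = none) →
      (SphSS n).d n n z = (SphSS n).d n (n + 1) z := by
    intro z hz
    cases z with
    | none => rfl
    | some f =>
      have hns : ∀ j : Fin (n+2), j.val < n → ∀ a, f.1 a = f.1 j → a = j := by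
        intro j hj a ha
        have h1 := hz j.val hj
        rw [d_some] at h1
        by_cases hsurj : Function.Surjective (f.1 ∘ coface n j.val)
        · rw [dif_pos hsurj] at h1
          exact absurd h1 (by simp)
        · have hsurj' : ¬ Function.Surjective (f.1 ∘ Fin.succAbove j) := by
            rw [coface_eq (by omega : j.val ≤ n + 1)] at hsurj
            have hj' : (⟨j.val, by omega⟩ : Fin (n+2)) = j := rfl
            rwa [hj'] at hsurj
          exact fiber_singleton f.1 f.2.2 j hsurj' a ha
      obtain ⟨a, b, hab, hfab⟩ :=
        Fintype.exists_ne_map_eq_of_card_lt f.1 (by simp)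
      have ha' : n ≤ a.val := by
        by_contra h
        push_neg at h
        exact hab ((hns a h b hfab.symm).symm)
      have hb' : n ≤ b.val := by
        by_contra h
        push_neg at h
        exact hab (hns b h a hfab)
      have key : f.1 ⟨n, by omega⟩ = f.1 ⟨n+1, by omega⟩ := by
        have hav := a.isLt
        have hbv := b.isLt
        have hne : a.val ≠ b.val := fun h => hab (Fin.ext h)
        rcases (by omega : a.val = n ∧ b.val = n+1 ∨ a.val = n+1 ∧ b.val = n) with
          ⟨h1, h2⟩ | ⟨h1, h2⟩
        · rw [show (⟨n, by omega⟩ : Fin (n+2)) = a from Fin.ext h1.symm,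
            show (⟨n+1, by omega⟩ : Fin (n+2)) = b from Fin.ext h2.symm]
          exact hfab
        · rw [show (⟨n, by omega⟩ : Fin (n+2)) = b from Fin.ext h2.symm,
            show (⟨n+1, by omega⟩ : Fin (n+2)) = a from Fin.ext h1.symm]
          exact hfab.symm
      have hcomp : f.1 ∘ coface n n = f.1 ∘ coface n (n+1) := by
        funext k
        rw [coface_eq (by omega : n ≤ n + 1), coface_eq (le_refl (n+1))]
        simp only [Function.comp_apply]
        rcases lt_or_ge k.val n with hk | hk
        · rw [Fin.succAbove_of_castSucc_lt ⟨n, by omega⟩ k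
              (by simp only [Fin.lt_def, Fin.coe_castSucc]; omega),
            Fin.succAbove_of_castSucc_lt ⟨n+1, by omega⟩ k
              (by simp only [Fin.lt_def, Fin.coe_castSucc]; omega)]
        · have hk' : k.val = n := by omega
          rw [Fin.succAbove_of_le_castSucc ⟨n, by omega⟩ k
              (by simp only [Fin.le_def, Fin.coe_castSucc]; omega),
            Fin.succAbove_of_castSucc_lt ⟨n+1, by omega⟩ k
              (by simp only [Fin.lt_def, Fin.coe_castSucc]; omega)]
          rw [show Fin.succ k = ⟨n+1, by omega⟩ from Fin.ext (by simp [hk']),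
            show Fin.castSucc k = ⟨n, by omega⟩ from Fin.ext (by simp [hk'])]
          exact key.symm
      by_cases hs1 : Function.Surjective (f.1 ∘ coface n n)
      · have hs2 : Function.Surjective (f.1 ∘ coface n (n+1)) := by rwa [hcomp] at hs1
        rw [d_some, d_some, dif_pos hs1, dif_pos hs2]
        exact congrArg some (Subtype.ext hcomp)
      · have hs2 : ¬ Function.Surjective (f.1 ∘ coface n (n+1)) := by rwa [hcomp] at hs1
        rw [d_some, d_some, dif_neg hs1, dif_neg hs2]
  refine ⟨?_, part2, ?_⟩
  · intro x _
    cases x with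
    | none => exact Or.inl rfl
    | some f =>
      exact Or.inr (congrArg some (Subtype.ext (monoSurjId f.1 f.2.1 f.2.2)))
  · rintro a b ⟨z, h1, h2, h3⟩
    have h := part2 z h1
    exact Subtype.ext (by rw [← h2, ← h3]; exact h)
end

section
/- For the Boolean semiring coefficients, H_m(S^n, H𝔹) = {*} when m ≠ n and H_m(S^n, H𝔹) = H𝔹 (as Γ-sets) when m = n. In particular π^comb_n(H𝔹 ∘ S^n) ≅ 𝔹 = {*, 1} (a two-element pointed set). -/
/-- The relation whose quotient collapses the wedge `A ∨ k₊ ⊆ A × k₊` to a point. -/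
def WedgeRel (A : Type) (a0 : A) (k : ℕ) (u v : A × Fin (k + 1)) : Prop :=
  (u.1 = a0 ∨ u.2 = 0) ∧ (v.1 = a0 ∨ v.2 = 0)

/-- The smash product `A ∧ k₊` of a pointed set `(A, a0)` with the pointed set
`k₊ = {0, 1, …, k}` (basepoint `0`). -/
def Smash (A : Type) (a0 : A) (k : ℕ) := Quot (WedgeRel A a0 k)

/-- The smash product `X ∧ k₊` of a pointed simplicial set with the discrete pointed
set `k₊`; faces act on the `X`-factor only. -/
def PSS.smash (X : PSS) (k : ℕ) : PSS where
  obj n := Smash (X.obj n) (X.pt n) k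
  pt n := Quot.mk _ (X.pt n, 0)
  d n j := Quot.map (fun u => (X.d n j u.1, u.2)) (by
    rintro u v ⟨hu, hv⟩
    refine ⟨?_, ?_⟩
    · rcases hu with h | h
      · exact Or.inl (by dsimp only; rw [h]; exact X.d_pt n j)
      · exact Or.inr h
    · rcases hv with h | h
      · exact Or.inl (by dsimp only; rw [h]; exact X.d_pt n j)
      · exact Or.inr h)
  d_pt n j := by
    show Quot.mk _ (X.d n j (X.pt (n + 1)), (0 : Fin (k + 1))) = Quot.mk _ (X.pt n, 0)
    rw [X.d_pt]

open scoped Classical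

/-- The pointed simplicial set `H𝔹 ∘ X`: levelwise, the finite subsets of `X_n`
containing the basepoint, with faces acting by direct image. -/
noncomputable def HBpss (X : PSS) : PSS where
  obj n := {Z : Finset (X.obj n) // X.pt n ∈ Z}
  pt n := ⟨{X.pt n}, Finset.mem_singleton_self _⟩
  d n j Z := ⟨Z.1.image (X.d n j), by
    rw [← X.d_pt n j]; exact Finset.mem_image_of_mem _ Z.2⟩
  d_pt n j := by
    apply Subtype.ext
    simp [X.d_pt n j]

/-!
Outside dimension `n` the only spherical simplex of `Sⁿ` is the basepoint; every `n`-simplex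
is spherical; and an `(n+1)`-simplex whose first `n` faces are trivial has equal last two faces,
since a monotone surjection `[n+1] → [n]` none of whose faces `δ_j`, `j < n`, is surjective must
identify `n` and `n+1`. All three properties pass to `X ∧ k₊` and to `H𝔹 ∘ X`, whose faces act
on the `X`-factor and by direct image. So `π^comb_m` is a point for `m ≠ n`, while for `m = n`
the homotopy relation is equality and `π^comb_n` is the set of all `n`-simplices of `H𝔹 ∘ X`,
the finite subsets of `(Sⁿ ∧ k₊)_n ≅ k₊` (resp. `Sⁿ_n = {*, ι}`) containing the basepoint.
-/

open Function

theorem Monotone.eq_id_of_surjective {α : Type*} [LinearOrder α] [Finite α] {f : α → α}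
    (hm : Monotone f) (hs : Surjective f) : f = id := by
  have hsm := hm.strictMono_of_injective (Finite.injective_iff_surjective.mpr hs)
  exact congrArg DFunLike.coe
    (Subsingleton.elim (hsm.orderIsoOfSurjective f hs) (OrderIso.refl α))

instance {α : Type*} [LinearOrder α] [Finite α] :
    Unique {f : α → α // Monotone f ∧ Surjective f} where
  default := ⟨id, monotone_id, surjective_id⟩
  uniq f := Subtype.ext (f.2.1.eq_id_of_surjective f.2.2)

theorem Fin.surjective_comp_succAbove_of_eq {β : Type*} {q : ℕ} {f : Fin (q + 2) → β}
    (hf : Surjective f) {i j : Fin (q + 2)} (hij : i ≠ j) (h : f i = f j) :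
    Surjective (f ∘ i.succAbove) := by
  intro y
  obtain ⟨x, rfl⟩ := hf y
  rcases eq_or_ne x i with rfl | hx
  · obtain ⟨c, hc⟩ := Fin.exists_succAbove_eq hij.symm
    exact ⟨c, by simp [hc, h]⟩
  · obtain ⟨c, hc⟩ := Fin.exists_succAbove_eq hx
    exact ⟨c, by simp [hc]⟩

theorem Fin.comp_succAbove_castSucc_eq {β : Type*} {q : ℕ} {f : Fin (q + 2) → β}
    {j : Fin (q + 1)} (h : f j.castSucc = f j.succ) :
    f ∘ j.castSucc.succAbove = f ∘ j.succ.succAbove := by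
  funext x
  rcases lt_trichotomy x j with hx | rfl | hx
  · simp [Fin.succAbove_of_castSucc_lt _ _ (Fin.castSucc_lt_castSucc_iff.2 hx),
      Fin.succAbove_succ_of_le _ _ hx.le]
  · simp [h]
  · simp [Fin.succAbove_castSucc_of_le _ _ hx.le,
      Fin.succAbove_of_le_castSucc _ _ (Fin.succ_le_castSucc_iff.2 hx)]

def Equiv.finsetContainingCongr {A B : Type*} {a : A} {b : B} (e : A ≃ B) (h : e a = b) :
    {Z : Finset A // a ∈ Z} ≃ {Z : Finset B // b ∈ Z} :=
  e.finsetCongr.subtypeEquiv fun Z => by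
    rw [Equiv.finsetCongr_apply, Finset.mem_map_equiv, ← h, Equiv.symm_apply_apply]

def Finset.containingNoneEquiv (α : Type*) :
    {Z : Finset (Option α) // none ∈ Z} ≃ Finset α where
  toFun Z := Finset.eraseNone Z.1
  invFun s := ⟨Finset.insertNone s, by simp⟩
  left_inv Z := Subtype.ext (by simp [Finset.insert_eq_of_mem Z.2])
  right_inv := Finset.eraseNone_insertNone

noncomputable def Finset.equivBoolOfUnique (α : Type*) [Unique α] : Finset α ≃ Bool :=
  Fintype.finsetEquivSet.trans ((Equiv.funUnique α Prop).trans Equiv.propEquivBool)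

namespace Smash

variable {A : Type} {a0 : A} {k : ℕ}

theorem mk_eq_mk_pt_iff {u : A × Fin (k + 1)} :
    (Quot.mk _ u : Smash A a0 k) = Quot.mk _ (a0, 0) ↔ u.1 = a0 ∨ u.2 = 0 := by
  refine ⟨fun h => ?_, fun h => Quot.sound ⟨h, Or.inl rfl⟩⟩
  have := congrArg (Quot.lift (fun v : A × Fin (k + 1) => v.1 = a0 ∨ v.2 = 0)
    fun _ _ ⟨hu, hv⟩ => propext (iff_of_true hu hv)) h
  exact this.mpr (Or.inl rfl)

noncomputable def optionEquiv (α : Type) [Unique α] (k : ℕ) :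
    Smash (Option α) none k ≃ Fin (k + 1) where
  toFun := Quot.lift (fun u => u.1.elim 0 fun _ => u.2) <| by
    have h : ∀ u : Option α × Fin (k + 1), u.1 = none ∨ u.2 = 0 →
        u.1.elim 0 (fun _ => u.2) = 0 := by
      rintro ⟨_ | _, t⟩ (h | h) <;> simp_all
    exact fun u v ⟨hu, hv⟩ => (h u hu).trans (h v hv).symm
  invFun t := Quot.mk _ (some default, t)
  left_inv := by
    rintro ⟨_ | a, t⟩
    · exact Quot.sound ⟨Or.inr rfl, Or.inl rfl⟩
    · rw [Unique.eq_default a]; rfl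
  right_inv _ := rfl

end Smash

namespace PSS

variable (X : PSS)

def SphTrivial (m : ℕ) : Prop := ∀ x, X.isSph m x → x = X.pt m

def AllSph (m : ℕ) : Prop := ∀ x : X.obj m, X.isSph m x

def LastFacesAgree (n : ℕ) : Prop :=
  ∀ z : X.obj (n + 1), (∀ j < n, X.d n j z = X.pt n) → X.d n n z = X.d n (n + 1) z

variable {X}

theorem Rel.eq {n : ℕ} (h : X.LastFacesAgree n) {a b : X.Sph n} (hab : X.Rel n a b) : a = b := by
  obtain ⟨z, hz, ha, hb⟩ := hab
  exact Subtype.ext (ha ▸ hb ▸ h z hz)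

theorem SphTrivial.picomb_subsingleton {m : ℕ} (h : X.SphTrivial m) :
    Subsingleton (X.picomb m) where
  allEq := by
    have hpt : ∀ a : X.Sph m, a = X.sphPt m := fun a => Subtype.ext (h a.1 a.2)
    rintro ⟨a⟩ ⟨b⟩
    rw [hpt a, hpt b]

def picombEquivObj {n : ℕ} (h : X.LastFacesAgree n) (hs : X.AllSph n) :
    X.picomb n ≃ X.obj n where
  toFun := Quot.lift Subtype.val fun _ _ hab => congrArg Subtype.val (Rel.eq h hab)
  invFun x := Quot.mk _ ⟨x, hs x⟩
  left_inv := Quot.ind fun _ => rfl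
  right_inv _ := rfl

theorem smash_mk_eq_pt_iff {k n : ℕ} {x : X.obj n} {t : Fin (k + 1)} :
    (Quot.mk _ (x, t) : (X.smash k).obj n) = (X.smash k).pt n ↔ x = X.pt n ∨ t = 0 :=
  Smash.mk_eq_mk_pt_iff

theorem SphTrivial.smash {m : ℕ} (h : X.SphTrivial m) (k : ℕ) : (X.smash k).SphTrivial m := by
  rintro ⟨x, t⟩ hy
  rcases eq_or_ne t 0 with ht | ht
  · exact smash_mk_eq_pt_iff.2 (Or.inr ht)
  refine smash_mk_eq_pt_iff.2 (Or.inl (h x ?_))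
  cases m with
  | zero => trivial
  | succ q => exact fun j hj => (smash_mk_eq_pt_iff.1 (hy j hj)).resolve_right ht

theorem AllSph.smash {m : ℕ} (h : X.AllSph m) (k : ℕ) : (X.smash k).AllSph m := by
  cases m with
  | zero => exact fun _ => trivial
  | succ q =>
    rintro ⟨x, t⟩ j hj
    exact smash_mk_eq_pt_iff.2 (Or.inl (h x j hj))

theorem LastFacesAgree.smash {n : ℕ} (h : X.LastFacesAgree n) (k : ℕ) :
    (X.smash k).LastFacesAgree n := by
  rintro ⟨x, t⟩ hz
  rcases eq_or_ne t 0 with rfl | ht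
  · exact Quot.sound ⟨Or.inr rfl, Or.inr rfl⟩
  · show Quot.mk _ (X.d n n x, t) = Quot.mk _ (X.d n (n + 1) x, t)
    rw [h x fun j hj => (smash_mk_eq_pt_iff.1 (hz j hj)).resolve_right ht]

end PSS

namespace HBpss

variable {X : PSS}

theorem d_eq_pt_iff {n j : ℕ} {W : (HBpss X).obj (n + 1)} :
    (HBpss X).d n j W = (HBpss X).pt n ↔ ∀ x ∈ W.1, X.d n j x = X.pt n := by
  refine Subtype.ext_iff.trans ⟨fun h x hx => ?_, fun h => ?_⟩
  · have himage : W.1.image (X.d n j) = {X.pt n} := h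
    exact Finset.mem_singleton.1 (himage ▸ Finset.mem_image_of_mem _ hx)
  · refine Finset.eq_singleton_iff_unique_mem.2 ⟨?_, ?_⟩
    · exact Finset.mem_image.2 ⟨X.pt (n + 1), W.2, X.d_pt n j⟩
    · rintro _ hy
      obtain ⟨x, hx, rfl⟩ := Finset.mem_image.1 hy
      exact h x hx

theorem isSph_of_mem {m : ℕ} {W : (HBpss X).obj m} (hW : (HBpss X).isSph m W) {x : X.obj m}
    (hx : x ∈ W.1) : X.isSph m x := by
  cases m with
  | zero => trivial
  | succ q => exact fun j hj => d_eq_pt_iff.1 (hW j hj) x hx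

theorem _root_.PSS.SphTrivial.HBpss {m : ℕ} (h : X.SphTrivial m) : (HBpss X).SphTrivial m :=
  fun W hW => Subtype.ext <|
    Finset.eq_singleton_iff_unique_mem.2 ⟨W.2, fun x hx => h x (isSph_of_mem hW hx)⟩

theorem _root_.PSS.AllSph.HBpss {m : ℕ} (h : X.AllSph m) : (HBpss X).AllSph m := by
  cases m with
  | zero => exact fun _ => trivial
  | succ q => exact fun _ j hj => d_eq_pt_iff.2 fun x _ => h x j hj

theorem _root_.PSS.LastFacesAgree.HBpss {n : ℕ} (h : X.LastFacesAgree n) :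
    (HBpss X).LastFacesAgree n :=
  fun _ hW => Subtype.ext <|
    Finset.image_congr fun x hx => h x fun j hj => d_eq_pt_iff.1 (hW j hj) x hx

end HBpss

namespace SphSS

theorem coface_eq (q : ℕ) (j : Fin (q + 2)) : coface q j = j.succAbove :=
  congrArg Fin.succAbove (Fin.ext (Nat.min_eq_left (Nat.lt_succ_iff.mp j.isLt)))

variable {n : ℕ}

theorem d_some_eq_none_iff {q j : ℕ}
    {f : {f : Fin (q + 2) → Fin (n + 1) // Monotone f ∧ Surjective f}} :
    (SphSS n).d q j (some f) = none ↔ ¬ Surjective (f.1 ∘ coface q j) := by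
  simp only [SphSS, Option.bind_some]
  split_ifs with h <;> simp [h]

theorem d_some_eq_of_comp_eq {q i j : ℕ}
    {f : {f : Fin (q + 2) → Fin (n + 1) // Monotone f ∧ Surjective f}}
    (h : f.1 ∘ coface q i = f.1 ∘ coface q j) :
    (SphSS n).d q i (some f) = (SphSS n).d q j (some f) := by
  simp only [SphSS, Option.bind_some, h]

theorem allSph (n : ℕ) : (SphSS n).AllSph n := by
  cases n with
  | zero => exact fun _ => trivial
  | succ q =>
    rintro (_ | ⟨f, -, hf⟩) j -
    · rfl
    · refine d_some_eq_none_iff.2 fun hs => ?_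
      simpa using Fintype.card_le_of_surjective _ hs

theorem sphTrivial {m : ℕ} (hmn : m ≠ n) : (SphSS n).SphTrivial m := by
  rintro (_ | ⟨f, _, hf⟩) hsph
  · rfl
  have hnm : n < m := by
    have := Fintype.card_le_of_surjective f hf
    simp only [Fintype.card_fin] at this
    omega
  obtain ⟨q, rfl⟩ : ∃ q, m = q + 1 := ⟨m - 1, by omega⟩
  obtain ⟨i, j, hij, hfij⟩ := Fintype.exists_ne_map_eq_of_card_lt f (by simpa using hnm)
  have hface := d_some_eq_none_iff.1 (hsph i (Nat.lt_succ_iff.mp i.isLt))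
  rw [coface_eq] at hface
  exact absurd (Fin.surjective_comp_succAbove_of_eq hf hij hfij) hface

theorem lastFacesAgree (n : ℕ) : (SphSS n).LastFacesAgree n := by
  rintro (_ | ⟨f, _, hf⟩) hz
  · rfl
  have hle : ∀ i j : Fin (n + 2), i ≠ j → f i = f j → n ≤ i.val := fun i j hij hfij =>
    not_lt.1 fun hi => by
      have hface := d_some_eq_none_iff.1 (hz i hi)
      rw [coface_eq] at hface
      exact hface (Fin.surjective_comp_succAbove_of_eq hf hij hfij)
  obtain ⟨i, j, hij, hfij⟩ := Fintype.exists_ne_map_eq_of_card_lt f (by simp)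
  have hi := hle i j hij hfij
  have hj := hle j i hij.symm hfij.symm
  have htop : f (Fin.last n).castSucc = f (Fin.last n).succ := by
    rcases Nat.lt_or_gt_of_ne (Fin.val_ne_of_ne hij) with h | h
    · rwa [show i = (Fin.last n).castSucc from Fin.ext (by simp; omega),
        show j = (Fin.last n).succ from Fin.ext (by simp; omega)] at hfij
    · rwa [show j = (Fin.last n).castSucc from Fin.ext (by simp; omega),
        show i = (Fin.last n).succ from Fin.ext (by simp; omega), eq_comm] at hfij
  apply d_some_eq_of_comp_eq
  rw [show coface n n = (Fin.last n).castSucc.succAbove from coface_eq n (Fin.last n).castSucc,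
    show coface n (n + 1) = (Fin.last n).succ.succAbove from coface_eq n (Fin.last n).succ]
  exact Fin.comp_succAbove_castSucc_eq htop

end SphSS

theorem stmt11_general (n k : ℕ) :
    (∀ m, m ≠ n → (∀ a b : (HBpss ((SphSS n).smash k)).picomb m, a = b) ∧
      Nonempty ((HBpss ((SphSS n).smash k)).picomb m)) ∧
    Nonempty ((HBpss ((SphSS n).smash k)).picomb n ≃ {Z : Finset (Fin (k + 1)) // 0 ∈ Z}) ∧
    Nonempty ((HBpss (SphSS n)).picomb n ≃ Bool) := by
  have hsph := SphSS.allSph n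
  have hagree := SphSS.lastFacesAgree n
  refine ⟨fun m hmn => ⟨((SphSS.sphTrivial hmn).smash k).HBpss.picomb_subsingleton.elim,
    ⟨PSS.picombPt _ m⟩⟩, ⟨?_⟩, ⟨?_⟩⟩
  · exact (PSS.picombEquivObj (hagree.smash k).HBpss (hsph.smash k).HBpss).trans
      (Equiv.finsetContainingCongr (a := ((SphSS n).smash k).pt n) (Smash.optionEquiv _ k) rfl)
  · exact (PSS.picombEquivObj hagree.HBpss hsph.HBpss).trans
      ((Finset.containingNoneEquiv _).trans (Finset.equivBoolOfUnique _))

/-- Homology of the sphere with coefficients in the Boolean `Γ`-set `H𝔹`: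
`H_m(Sⁿ, H𝔹)(k₊) = π^comb_m(H𝔹 ∘ (Sⁿ ∧ k₊))` is a point for `m ≠ n`, while for
`m = n` it is `H𝔹(k₊)` (finite subsets of `k₊` containing the basepoint); in particular
`π^comb_n(H𝔹 ∘ Sⁿ) ≅ 𝔹` has two elements. -/
theorem stmt11 (n k : ℕ) (hk : 0 < k) :
    (∀ m, m ≠ n → (∀ a b : (HBpss ((SphSS n).smash k)).picomb m, a = b) ∧
      Nonempty ((HBpss ((SphSS n).smash k)).picomb m)) ∧
    Nonempty ((HBpss ((SphSS n).smash k)).picomb n ≃ {Z : Finset (Fin (k + 1)) // 0 ∈ Z}) ∧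
    Nonempty ((HBpss (SphSS n)).picomb n ≃ Bool) :=
  stmt11_general n k
end

section
/- With c(0,i,j) as above and c_{(1,5)} := Σ_{i=1}^{4} c(0,i,i+1), under the edge identifications Δ'(1,2) = Δ'(4,3), Δ'(2,1) = Δ'(3,4), Δ'(2,3) = Δ'(5,4), Δ'(3,2) = Δ'(4,5), one has: ∂_0 c_{(1,5)} = 2Δ'(0,1) − 2Δ'(0,5) − Δ'(1,0) + Δ'(5,0), ∂_1 c_{(1,5)} = −Δ'(0,1) + Δ'(0,5) + Δ'(1,0) − Δ'(5,0), ∂_2 c_{(1,5)} = Δ'(0,1) − Δ'(0,5) − 2Δ'(1,0) + 2Δ'(5,0). -/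
/-!
Each face of `c(o,i,j)` is a combination of the three differences `Δ'(o,i) − Δ'(o,j)`,
`Δ'(i,o) − Δ'(j,o)` and `Δ'(i,j) − Δ'(j,i)`. Summed over `j = i + 1`, `1 ≤ i ≤ 4`, the first two
telescope to their values at `1` and `5`, and the third sums to zero because the identifications
glue the edges `1 → 2 → 3` onto `4 → 3`, `5 → 4` with reversed orientation.
-/

open Finset

section

variable {M M₂ : Type*} [AddCommGroup M] [AddCommGroup M₂] [Module ℝ M₂]

/-- The chain `c(o,i,j)` of the paper. -/
def permChain (Δ₂ : ℕ → ℕ → ℕ → M₂) (o i j : ℕ) : M₂ :=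
  Δ₂ o i j + Δ₂ i j o + (2:ℝ) • Δ₂ j o i - Δ₂ j i o - Δ₂ o j i - (2:ℝ) • Δ₂ i o j

lemma sum_Icc_one_four_sub_succ (f : ℕ → M) : ∑ i ∈ Icc 1 4, (f i - f (i + 1)) = f 1 - f 5 := by
  rw [show Icc 1 4 = Ico 1 5 from rfl]
  simpa only [Pi.neg_apply, neg_sub_neg] using sum_Ico_sub (-f) (by norm_num : 1 ≤ 5)

lemma sum_Icc_one_four_edge_sub_reverse {Δ₁ : ℕ → ℕ → M}
    (e1 : Δ₁ 1 2 = Δ₁ 4 3) (e2 : Δ₁ 2 1 = Δ₁ 3 4) (e3 : Δ₁ 2 3 = Δ₁ 5 4) (e4 : Δ₁ 3 2 = Δ₁ 4 5) :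
    ∑ i ∈ Icc 1 4, (Δ₁ i (i + 1) - Δ₁ (i + 1) i) = 0 := by
  rw [show Icc 1 4 = {1, 2, 3, 4} from rfl]
  simp only [sum_insert, sum_singleton, mem_insert, mem_singleton, OfNat.one_ne_ofNat,
    Nat.reduceEqDiff, or_self, not_false_eq_true, Nat.reduceAdd, e1, e2, e3, e4]
  abel

variable [Module ℝ M]

lemma face0_permChain {D : M₂ →ₗ[ℝ] M} {Δ₂ : ℕ → ℕ → ℕ → M₂} {Δ₁ : ℕ → ℕ → M}
    (h : ∀ a b c, D (Δ₂ a b c) = Δ₁ b c) (o i j : ℕ) :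
    D (permChain Δ₂ o i j) =
      (2:ℝ) • (Δ₁ o i - Δ₁ o j) + (-1:ℝ) • (Δ₁ i o - Δ₁ j o) + (1:ℝ) • (Δ₁ i j - Δ₁ j i) := by
  simp only [permChain, map_add, map_sub, map_smul, h]
  module

lemma face1_permChain {D : M₂ →ₗ[ℝ] M} {Δ₂ : ℕ → ℕ → ℕ → M₂} {Δ₁ : ℕ → ℕ → M}
    (h : ∀ a b c, D (Δ₂ a b c) = Δ₁ a c) (o i j : ℕ) :
    D (permChain Δ₂ o i j) =
      (-1:ℝ) • (Δ₁ o i - Δ₁ o j) + (1:ℝ) • (Δ₁ i o - Δ₁ j o) + (-2:ℝ) • (Δ₁ i j - Δ₁ j i) := by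
  simp only [permChain, map_add, map_sub, map_smul, h]
  module

lemma face2_permChain {D : M₂ →ₗ[ℝ] M} {Δ₂ : ℕ → ℕ → ℕ → M₂} {Δ₁ : ℕ → ℕ → M}
    (h : ∀ a b c, D (Δ₂ a b c) = Δ₁ a b) (o i j : ℕ) :
    D (permChain Δ₂ o i j) =
      (1:ℝ) • (Δ₁ o i - Δ₁ o j) + (-2:ℝ) • (Δ₁ i o - Δ₁ j o) + (1:ℝ) • (Δ₁ i j - Δ₁ j i) := by
  simp only [permChain, map_add, map_sub, map_smul, h]
  module

lemma map_sum_permChain {D : M₂ →ₗ[ℝ] M} {Δ₂ : ℕ → ℕ → ℕ → M₂} {Δ₁ : ℕ → ℕ → M} {a b k : ℝ}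
    (o : ℕ) (hD : ∀ i j, D (permChain Δ₂ o i j) =
      a • (Δ₁ o i - Δ₁ o j) + b • (Δ₁ i o - Δ₁ j o) + k • (Δ₁ i j - Δ₁ j i))
    (e1 : Δ₁ 1 2 = Δ₁ 4 3) (e2 : Δ₁ 2 1 = Δ₁ 3 4) (e3 : Δ₁ 2 3 = Δ₁ 5 4) (e4 : Δ₁ 3 2 = Δ₁ 4 5) :
    D (∑ i ∈ Icc 1 4, permChain Δ₂ o i (i + 1)) =
      a • (Δ₁ o 1 - Δ₁ o 5) + b • (Δ₁ 1 o - Δ₁ 5 o) := by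
  simp only [map_sum, hD, sum_add_distrib, ← smul_sum,
    sum_Icc_one_four_sub_succ (Δ₁ o), sum_Icc_one_four_sub_succ (Δ₁ · o),
    sum_Icc_one_four_edge_sub_reverse e1 e2 e3 e4, smul_zero, add_zero]

end

/-- With `c(0,i,j) := Δ'(0,i,j) + Δ'(i,j,0) + 2Δ'(j,0,i) − Δ'(j,i,0) − Δ'(0,j,i) − 2Δ'(i,0,j)`
and `c_{(1,5)} := Σ_{i=1}^{4} c(0,i,i+1)`, under the edge identifications
`Δ'(1,2)=Δ'(4,3)`, `Δ'(2,1)=Δ'(3,4)`, `Δ'(2,3)=Δ'(5,4)`, `Δ'(3,2)=Δ'(4,5)` of the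
building block `K`, the three simplicial boundaries of `c_{(1,5)}` are as stated. -/
theorem stmt15 {M2 M1 : Type*}
    [AddCommGroup M2] [Module ℝ M2] [AddCommGroup M1] [Module ℝ M1]
    (D0 D1 D2 : M2 →ₗ[ℝ] M1)
    (Δ2 : ℕ → ℕ → ℕ → M2) (Δ1 : ℕ → ℕ → M1)
    (h0 : ∀ a b c, D0 (Δ2 a b c) = Δ1 b c)
    (h1 : ∀ a b c, D1 (Δ2 a b c) = Δ1 a c)
    (h2 : ∀ a b c, D2 (Δ2 a b c) = Δ1 a b)
    (e1 : Δ1 1 2 = Δ1 4 3) (e2 : Δ1 2 1 = Δ1 3 4)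
    (e3 : Δ1 2 3 = Δ1 5 4) (e4 : Δ1 3 2 = Δ1 4 5)
    (c : ℕ → ℕ → ℕ → M2)
    (hc : ∀ o i j, c o i j =
      Δ2 o i j + Δ2 i j o + (2:ℝ) • Δ2 j o i - Δ2 j i o - Δ2 o j i - (2:ℝ) • Δ2 i o j)
    (c15 : M2) (hc15 : c15 = ∑ i ∈ Finset.Icc 1 4, c 0 i (i + 1)) :
    (D0 c15 = (2:ℝ) • Δ1 0 1 - (2:ℝ) • Δ1 0 5 - Δ1 1 0 + Δ1 5 0) ∧
    (D1 c15 = -Δ1 0 1 + Δ1 0 5 + Δ1 1 0 - Δ1 5 0) ∧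
    (D2 c15 = Δ1 0 1 - Δ1 0 5 - (2:ℝ) • Δ1 1 0 + (2:ℝ) • Δ1 5 0) := by
  obtain rfl : c = permChain Δ2 := funext fun o => funext fun i => funext (hc o i)
  subst hc15
  refine ⟨?_, ?_, ?_⟩
  · rw [map_sum_permChain 0 (face0_permChain h0 0) e1 e2 e3 e4]; module
  · rw [map_sum_permChain 0 (face1_permChain h1 0) e1 e2 e3 e4]; module
  · rw [map_sum_permChain 0 (face2_permChain h2 0) e1 e2 e3 e4]; module
end
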